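/- arXiv:2301.07762 — 2 statements merged into one kernel-verified Lean document; each statement's English description precedes it below -/
import Mathlib

section
/- Let (η_1,…,η_N) be a random vector of nonnegative reals with η_1 ≥ η_2 ≥ ⋯ ≥ η_N and Σ_{i=1}^N η_i = 1. For integers a ≥ 2 and b_1,…,b_a ≥ 2, the sum over all 1 ≤ i_1 < ⋯ < i_a ≤ N of E[η_{i_1}^{b_1}⋯η_{i_a}^{b_a}] is at most 2·E[Σ_{i=2}^N η_i²]. -/
open MeasureTheory ProbabilityTheory Filter

/-- Elementary symmetric sums of nonnegative reals are bounded by powers of the full sum. -/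
lemma esymm_le_pow (η : ℕ → ℝ) (U : Finset ℕ) (h0 : ∀ j ∈ U, 0 ≤ η j) (m : ℕ) :
    ∑ t ∈ U.powersetCard m, ∏ j ∈ t, η j ≤ (∑ j ∈ U, η j) ^ m := by
  induction U using Finset.induction_on generalizing m with
  | empty =>
    cases m with
    | zero => simp
    | succ m =>
      rw [Finset.powersetCard_eq_empty.mpr (by simp)]
      simp
  | @insert x U hx ih =>
    have hx0 : 0 ≤ η x := h0 x (Finset.mem_insert_self x U)
    have h0' : ∀ j ∈ U, 0 ≤ η j := fun j hj => h0 j (Finset.mem_insert_of_mem hj)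
    have hS0 : 0 ≤ ∑ j ∈ U, η j := Finset.sum_nonneg h0'
    cases m with
    | zero => simp
    | succ m =>
      rw [Finset.powersetCard_succ_insert hx]
      have hdisj : Disjoint (Finset.powersetCard (m+1) U)
          ((Finset.powersetCard m U).image (insert x)) := by
        rw [Finset.disjoint_left]
        intro t ht ht'
        obtain ⟨u, hu, rfl⟩ := Finset.mem_image.mp ht'
        have := (Finset.mem_powersetCard.mp ht).1
        exact hx (this (Finset.mem_insert_self x u))
      rw [Finset.sum_union hdisj]
      have himg : ∑ t ∈ (Finset.powersetCard m U).image (insert x), ∏ j ∈ t, η j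
          = ∑ t ∈ Finset.powersetCard m U, η x * ∏ j ∈ t, η j := by
        rw [Finset.sum_image]
        · refine Finset.sum_congr rfl fun t ht => ?_
          have hxt : x ∉ t := fun hxt =>
            hx ((Finset.mem_powersetCard.mp ht).1 hxt)
          rw [Finset.prod_insert hxt]
        · intro t ht u hu hins
          have hxt : x ∉ t := fun hxt => hx ((Finset.mem_powersetCard.mp ht).1 hxt)
          have hxu : x ∉ u := fun hxu => hx ((Finset.mem_powersetCard.mp hu).1 hxu)
          rw [← Finset.erase_insert hxt, ← Finset.erase_insert hxu, hins]
      rw [himg, ← Finset.mul_sum, Finset.sum_insert hx]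
      have h1 : ∑ t ∈ Finset.powersetCard (m+1) U, ∏ j ∈ t, η j
          ≤ (∑ j ∈ U, η j) ^ (m+1) := ih h0' (m+1)
      have h2 : ∑ t ∈ Finset.powersetCard m U, ∏ j ∈ t, η j
          ≤ (∑ j ∈ U, η j) ^ m := ih h0' m
      have key : (∑ j ∈ U, η j) ^ (m+1) + η x * (∑ j ∈ U, η j) ^ m
          ≤ (η x + ∑ j ∈ U, η j) ^ (m+1) := by
        have hpm : (∑ j ∈ U, η j) ^ m ≤ (η x + ∑ j ∈ U, η j) ^ m :=
          pow_le_pow_left₀ hS0 (by linarith) m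
        calc (∑ j ∈ U, η j) ^ (m+1) + η x * (∑ j ∈ U, η j) ^ m
            = (∑ j ∈ U, η j + η x) * (∑ j ∈ U, η j) ^ m := by ring
          _ ≤ (∑ j ∈ U, η j + η x) * (η x + ∑ j ∈ U, η j) ^ m := by
              apply mul_le_mul_of_nonneg_left hpm; linarith
          _ = (η x + ∑ j ∈ U, η j) ^ (m+1) := by ring
      have := mul_le_mul_of_nonneg_left h2 hx0
      linarith

/-- For a random mass partition (η_1 ≥ ⋯ ≥ η_N ≥ 0, Σ η_i = 1) and integers a ≥ 2,
    b_1,…,b_a ≥ 2, the sum over 1 ≤ i_1 < ⋯ < i_a ≤ N of E[η_{i_1}^{b_1}⋯η_{i_a}^{b_a}]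
    is at most 2·E[Σ_{i=2}^N η_i²]. -/
theorem sum_products_le_twice {Ω : Type*} [MeasurableSpace Ω] (P : Measure Ω)
    [IsProbabilityMeasure P] (N : ℕ) (η : ℕ → Ω → ℝ)
    (hmeas : ∀ i, Measurable (η i))
    (hnonneg : ∀ ω, ∀ i ∈ Finset.Icc 1 N, 0 ≤ η i ω)
    (hmono : ∀ ω, ∀ i ∈ Finset.Icc 1 N, ∀ j ∈ Finset.Icc 1 N, i ≤ j → η j ω ≤ η i ω)
    (hsum : ∀ ω, ∑ i ∈ Finset.Icc 1 N, η i ω = 1)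
    (a : ℕ) (ha : 2 ≤ a) (b : Fin a → ℕ) (hb : ∀ j, 2 ≤ b j) :
    ∑ s ∈ ((Finset.Icc 1 N).powersetCard a).attach,
        ∫ ω, ∏ j : Fin a,
          (η (s.1.orderEmbOfFin ((Finset.mem_powersetCard.mp s.2).2) j) ω) ^ (b j) ∂P
      ≤ 2 * ∫ ω, ∑ i ∈ Finset.Icc 2 N, (η i ω) ^ 2 ∂P := by
  have ha1 : (1 : ℕ) < a := ha
  have ha0 : (0 : ℕ) < a := by omega
  set S := (Finset.Icc 1 N).powersetCard a with hS
  -- basic facts about elements of S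
  have hcard : ∀ s : {x // x ∈ S}, s.1.card = a := fun s => (Finset.mem_powersetCard.mp s.2).2
  have hsub : ∀ s : {x // x ∈ S}, s.1 ⊆ Finset.Icc 1 N :=
    fun s => (Finset.mem_powersetCard.mp s.2).1
  set e : {x // x ∈ S} → Fin a → ℕ :=
    fun s => s.1.orderEmbOfFin (hcard s) with he
  set f : {x // x ∈ S} → Ω → ℝ := fun s ω => ∏ j : Fin a, (η (e s j) ω) ^ (b j) with hf
  set g : Ω → ℝ := fun ω => ∑ i ∈ Finset.Icc 2 N, (η i ω) ^ 2 with hg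
  have hη1 : ∀ ω, ∀ i ∈ Finset.Icc 1 N, η i ω ≤ 1 := by
    intro ω i hi
    have := Finset.single_le_sum (f := fun j => η j ω) (fun j hj => hnonneg ω j hj) hi
    rw [hsum ω] at this; exact this
  -- the second element of s
  set k : {x // x ∈ S} → ℕ := fun s => e s ⟨1, ha1⟩ with hk
  have hkmem : ∀ s, k s ∈ s.1 := fun s => Finset.orderEmbOfFin_mem _ _ _
  have hk2N : ∀ s, k s ∈ Finset.Icc 2 N := by
    intro s
    have h0mem : e s ⟨0, ha0⟩ ∈ s.1 := Finset.orderEmbOfFin_mem _ _ _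
    have h01 : e s ⟨0, ha0⟩ < e s ⟨1, ha1⟩ :=
      (s.1.orderEmbOfFin (hcard s)).strictMono (by simp [Fin.lt_def])
    have h1le : 1 ≤ e s ⟨0, ha0⟩ := (Finset.mem_Icc.mp (hsub s h0mem)).1
    have hle : k s ≤ N := (Finset.mem_Icc.mp (hsub s (hkmem s))).2
    have hks : k s = e s ⟨1, ha1⟩ := rfl
    exact Finset.mem_Icc.mpr ⟨by omega, hle⟩
  -- pointwise bound for each s
  have hstep1 : ∀ s : {x // x ∈ S}, ∀ ω,
      f s ω ≤ (η (k s) ω) ^ 2 * ∏ i ∈ s.1.erase (k s), η i ω := by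
    intro s ω
    have himage : Finset.univ.image (e s) = s.1 := by
      ext i
      simp only [Finset.mem_image, Finset.mem_univ, true_and]
      constructor
      · rintro ⟨j, rfl⟩; exact Finset.orderEmbOfFin_mem _ _ _
      · intro hi
        have hr := Finset.range_orderEmbOfFin s.1 (hcard s)
        have : i ∈ Set.range (s.1.orderEmbOfFin (hcard s)) := by rw [hr]; exact hi
        obtain ⟨j, hj⟩ := this
        exact ⟨j, hj⟩
    have hinj : Function.Injective (e s) := (s.1.orderEmbOfFin (hcard s)).injective
    have hreindex : ∏ i ∈ s.1, (η i ω) ^ (if i = k s then 2 else 1)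
        = ∏ j : Fin a, (η (e s j) ω) ^ (if e s j = k s then 2 else 1) := by
      rw [← himage, Finset.prod_image (fun x _ y _ h => hinj h)]
    have heq : ∏ i ∈ s.1, (η i ω) ^ (if i = k s then 2 else 1)
        = (η (k s) ω) ^ 2 * ∏ i ∈ s.1.erase (k s), η i ω := by
      rw [← Finset.mul_prod_erase s.1 _ (hkmem s), if_pos rfl]
      congr 1
      refine Finset.prod_congr rfl fun i hi => ?_
      rw [if_neg (Finset.ne_of_mem_erase hi), pow_one]
    rw [← heq, hreindex]
    refine Finset.prod_le_prod (fun j _ => pow_nonneg (hnonneg ω _ (hsub s (Finset.orderEmbOfFin_mem _ _ _))) _) ?_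
    intro j _
    have h0 : 0 ≤ η (e s j) ω := hnonneg ω _ (hsub s (Finset.orderEmbOfFin_mem _ _ _))
    have h1 : η (e s j) ω ≤ 1 := hη1 ω _ (hsub s (Finset.orderEmbOfFin_mem _ _ _))
    refine pow_le_pow_of_le_one h0 h1 ?_
    split_ifs
    · exact hb j
    · have := hb j; omega
  -- summing the pointwise bounds
  have hkey : ∀ ω, ∑ s ∈ S.attach, f s ω ≤ g ω := by
    intro ω
    have hstep2 : ∑ s ∈ S.attach, f s ω
        ≤ ∑ s ∈ S.attach, (η (k s) ω) ^ 2 * ∏ i ∈ s.1.erase (k s), η i ω :=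
      Finset.sum_le_sum fun s _ => hstep1 s ω
    set T := (Finset.Icc 2 N) ×ˢ ((Finset.Icc 1 N).powersetCard (a - 1)) with hT
    set F : {x // x ∈ S} → ℕ × Finset ℕ := fun s => (k s, s.1.erase (k s)) with hF
    set φ : ℕ × Finset ℕ → ℝ := fun p => (η p.1 ω) ^ 2 * ∏ i ∈ p.2, η i ω with hφ
    have hφnonneg : ∀ p ∈ T, 0 ≤ φ p := by
      intro p hp
      have hp2 := (Finset.mem_powersetCard.mp (Finset.mem_product.mp hp).2).1
      exact mul_nonneg (sq_nonneg _)
        (Finset.prod_nonneg fun i hi => hnonneg ω i (hp2 hi))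
    have hFmem : ∀ s ∈ S.attach, F s ∈ T := by
      intro s _
      refine Finset.mem_product.mpr ⟨hk2N s, Finset.mem_powersetCard.mpr ⟨?_, ?_⟩⟩
      · exact (Finset.erase_subset _ _).trans (hsub s)
      · rw [Finset.card_erase_of_mem (hkmem s), hcard s]
    have hFinj : ∀ s ∈ S.attach, ∀ t ∈ S.attach, F s = F t → s = t := by
      intro s _ t _ hst
      have h1 : k s = k t := congrArg Prod.fst hst
      have h2 : s.1.erase (k s) = t.1.erase (k t) := congrArg Prod.snd hst
      have : s.1 = t.1 := by
        rw [← Finset.insert_erase (hkmem s), ← Finset.insert_erase (hkmem t), h2, h1]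
      exact Subtype.ext this
    have hstep3 : ∑ s ∈ S.attach, φ (F s) ≤ ∑ p ∈ T, φ p := by
      rw [← Finset.sum_image hFinj]
      refine Finset.sum_le_sum_of_subset_of_nonneg ?_ (fun p hp _ => hφnonneg p hp)
      intro p hp
      obtain ⟨s, hs, rfl⟩ := Finset.mem_image.mp hp
      exact hFmem s hs
    have hesymm : ∑ t ∈ (Finset.Icc 1 N).powersetCard (a - 1), ∏ i ∈ t, η i ω ≤ 1 := by
      have := esymm_le_pow (fun i => η i ω) (Finset.Icc 1 N) (hnonneg ω) (a - 1)
      rwa [hsum ω, one_pow] at this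
    have hstep4 : ∑ p ∈ T, φ p ≤ g ω := by
      rw [hT, Finset.sum_product]
      have : ∀ i ∈ Finset.Icc 2 N,
          ∑ t ∈ (Finset.Icc 1 N).powersetCard (a - 1), φ (i, t) ≤ (η i ω) ^ 2 := by
        intro i _
        have : ∑ t ∈ (Finset.Icc 1 N).powersetCard (a - 1), φ (i, t)
            = (η i ω) ^ 2 * ∑ t ∈ (Finset.Icc 1 N).powersetCard (a - 1), ∏ j ∈ t, η j ω := by
          rw [Finset.mul_sum]
        rw [this]
        calc (η i ω) ^ 2 * ∑ t ∈ (Finset.Icc 1 N).powersetCard (a - 1), ∏ j ∈ t, η j ω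
            ≤ (η i ω) ^ 2 * 1 := mul_le_mul_of_nonneg_left hesymm (sq_nonneg _)
          _ = (η i ω) ^ 2 := mul_one _
      exact Finset.sum_le_sum this
    calc ∑ s ∈ S.attach, f s ω
        ≤ ∑ s ∈ S.attach, φ (F s) := hstep2
      _ ≤ ∑ p ∈ T, φ p := hstep3
      _ ≤ g ω := hstep4
  -- integrability
  have hmf : ∀ s : {x // x ∈ S}, Measurable (f s) := by
    intro s
    exact Finset.measurable_prod _ fun j _ => (hmeas (e s j)).pow_const (b j)
  have hintf : ∀ s : {x // x ∈ S}, Integrable (f s) P := by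
    intro s
    refine (integrable_const (1 : ℝ)).mono' (hmf s).aestronglyMeasurable ?_
    filter_upwards with ω
    have h0 : 0 ≤ f s ω := Finset.prod_nonneg fun j _ =>
      pow_nonneg (hnonneg ω _ (hsub s (Finset.orderEmbOfFin_mem _ _ _))) _
    have h1 : f s ω ≤ 1 := by
      refine Finset.prod_le_one (fun j _ =>
        pow_nonneg (hnonneg ω _ (hsub s (Finset.orderEmbOfFin_mem _ _ _))) _) ?_
      intro j _
      exact pow_le_one₀ (hnonneg ω _ (hsub s (Finset.orderEmbOfFin_mem _ _ _)))
        (hη1 ω _ (hsub s (Finset.orderEmbOfFin_mem _ _ _)))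
    rw [Real.norm_eq_abs, abs_of_nonneg h0]; exact h1
  have hintg : Integrable g P := by
    refine integrable_finset_sum _ fun i hi => ?_
    refine (integrable_const (1 : ℝ)).mono'
      ((hmeas i).pow_const 2).aestronglyMeasurable ?_
    filter_upwards with ω
    have hiIcc : i ∈ Finset.Icc 1 N := by
      have := Finset.mem_Icc.mp hi; exact Finset.mem_Icc.mpr ⟨by omega, this.2⟩
    have h0 : 0 ≤ η i ω := hnonneg ω i hiIcc
    rw [Real.norm_eq_abs, abs_of_nonneg (pow_nonneg h0 2)]
    exact pow_le_one₀ h0 (hη1 ω i hiIcc)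
  have hgnonneg : 0 ≤ ∫ ω, g ω ∂P :=
    integral_nonneg fun ω => Finset.sum_nonneg fun i _ => sq_nonneg _
  calc ∑ s ∈ S.attach, ∫ ω, f s ω ∂P
      = ∫ ω, ∑ s ∈ S.attach, f s ω ∂P :=
        (integral_finset_sum _ fun s _ => hintf s).symm
    _ ≤ ∫ ω, g ω ∂P :=
        integral_mono (integrable_finset_sum _ fun s _ => hintf s) hintg hkey
    _ ≤ 2 * ∫ ω, g ω ∂P := by linarith
end

section
/- Let (E_i) be i.i.d. standard exponentials and w_k = 1/(E_1+⋯+E_k). Then for every N ≥ 1, E[ (Σ_{k=1}^N k^{-1}) / (Σ_{k=1}^N w_k) ] ≤ 1. -/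
open MeasureTheory ProbabilityTheory Filter Real

/-!
With `S_k = E_1 + ⋯ + E_k` and `H = Σ_{k ≤ N} k⁻¹`, Cauchy–Schwarz (equivalently, Jensen for
`t ↦ t⁻¹` with weights `k⁻¹ / H`) gives the pointwise bound
`H / Σ_k S_k⁻¹ ≤ (Σ_k k⁻² S_k) / H`, and since `E[S_k] = k` the right-hand side has
expectation `H / H = 1`.
-/

lemma Finset.sq_sum_le_sum_inv_mul_sum_sq_mul {ι : Type*} (s : Finset ι) {a y : ι → ℝ}
    (hy : ∀ i ∈ s, 0 < y i) :
    (∑ i ∈ s, a i) ^ 2 ≤ (∑ i ∈ s, (y i)⁻¹) * ∑ i ∈ s, a i ^ 2 * y i :=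
  s.sum_sq_le_sum_mul_sum_of_sq_le_mul (fun i hi => (inv_pos.2 (hy i hi)).le)
    (fun i hi => by have := hy i hi; positivity)
    (fun i hi => by rw [mul_left_comm, inv_mul_cancel₀ (hy i hi).ne', mul_one])

lemma Finset.sum_div_sum_inv_le {ι : Type*} (s : Finset ι) {a y : ι → ℝ}
    (ha : ∀ i ∈ s, 0 ≤ a i) (hy : ∀ i ∈ s, 0 < y i) :
    (∑ i ∈ s, a i) / ∑ i ∈ s, (y i)⁻¹ ≤ (∑ i ∈ s, a i ^ 2 * y i) / ∑ i ∈ s, a i := by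
  rcases (s.sum_nonneg ha).eq_or_lt with hsum | hsum
  · simp [← hsum]
  obtain ⟨i, hi⟩ : s.Nonempty := s.nonempty_of_sum_ne_zero hsum.ne'
  have hinv : 0 < ∑ i ∈ s, (y i)⁻¹ := s.sum_pos (fun i hi => inv_pos.2 (hy i hi)) ⟨i, hi⟩
  rw [div_le_div_iff₀ hinv hsum, ← sq, mul_comm]
  exact s.sq_sum_le_sum_inv_mul_sum_sq_mul hy

namespace ProbabilityTheory

lemma integral_id_expMeasure {r : ℝ} (hr : 0 < r) : ∫ x, x ∂expMeasure r = r⁻¹ := by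
  change ∫ x, x ∂volume.withDensity (fun x => ENNReal.ofReal (exponentialPDFReal r x)) = r⁻¹
  rw [integral_withDensity_eq_integral_toReal_smul
    (measurable_exponentialPDFReal r).ennreal_ofReal (ae_of_all _ fun _ => ENNReal.ofReal_lt_top),
    ← setIntegral_eq_integral_of_forall_compl_eq_zero (s := Set.Ioi 0)]
  · calc ∫ x in Set.Ioi 0, (ENNReal.ofReal (exponentialPDFReal r x)).toReal • x
        = ∫ x in Set.Ioi 0, r * (x ^ ((2 : ℝ) - 1) * exp (-(r * x))) := by
          refine setIntegral_congr_fun measurableSet_Ioi fun x (hx : 0 < x) => ?_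
          rw [ENNReal.toReal_ofReal (exponentialPDFReal_nonneg hr x)]
          norm_num [exponentialPDFReal, gammaPDFReal, hx.le]
          ring
      _ = r⁻¹ := by
          rw [integral_const_mul, integral_rpow_mul_exp_neg_mul_Ioi two_pos hr, Gamma_two,
            one_div, inv_rpow hr.le]
          norm_num
          field_simp
  · intro x hx
    rcases (Set.notMem_Ioi.1 hx).eq_or_lt with rfl | hneg
    · simp
    · simp [exponentialPDFReal, gammaPDFReal, hneg.not_ge]

lemma integrable_id_expMeasure {r : ℝ} (hr : 0 < r) : Integrable id (expMeasure r) :=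
  .of_integral_ne_zero (by simpa [integral_id_expMeasure hr] using hr.ne')

lemma ae_pos_expMeasure (r : ℝ) : ∀ᵐ x ∂expMeasure r, 0 < x := by
  change ∀ᵐ x ∂volume.withDensity (exponentialPDF r), 0 < x
  rw [ae_iff]
  simp only [not_lt]
  change volume.withDensity (exponentialPDF r) (Set.Iic 0) = 0
  rw [withDensity_apply _ measurableSet_Iic]
  exact (setLIntegral_congr Iio_ae_eq_Iic.symm).trans (lintegral_exponentialPDF_of_nonpos le_rfl)

lemma HasLaw.integrable {Ω : Type*} [MeasurableSpace Ω] {P : Measure Ω} {X : Ω → ℝ}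
    {μ : Measure ℝ} (hX : HasLaw X μ P) (hμ : Integrable id μ) : Integrable X P := by
  rwa [← hX.map_eq, integrable_map_measure aestronglyMeasurable_id hX.aemeasurable] at hμ

end ProbabilityTheory

section PartialSums

variable {Ω : Type*} [MeasurableSpace Ω] {P : Measure Ω} {X : ℕ → Ω → ℝ}

lemma integrable_sum_Icc_inv_sq_mul_sum_range (hint : ∀ i, Integrable (X i) P) (N : ℕ) :
    Integrable (fun ω => ∑ k ∈ Finset.Icc 1 N, (k : ℝ)⁻¹ ^ 2 * ∑ i ∈ Finset.range k, X i ω) P :=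
  integrable_finsetSum _ fun _ _ => (integrable_finsetSum _ fun i _ => hint i).const_mul _

lemma integral_sum_Icc_inv_sq_mul_sum_range (hint : ∀ i, Integrable (X i) P)
    (hmean : ∀ i, ∫ ω, X i ω ∂P = 1) (N : ℕ) :
    ∫ ω, ∑ k ∈ Finset.Icc 1 N, (k : ℝ)⁻¹ ^ 2 * ∑ i ∈ Finset.range k, X i ω ∂P =
      ∑ k ∈ Finset.Icc 1 N, (k : ℝ)⁻¹ := by
  rw [integral_finsetSum _ fun _ _ => (integrable_finsetSum _ fun i _ => hint i).const_mul _]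
  refine Finset.sum_congr rfl fun k hk => ?_
  have hk₀ : (k : ℝ) ≠ 0 := by simp; grind
  rw [integral_const_mul, integral_finsetSum _ fun i _ => hint i]
  simp only [hmean, Finset.sum_const, Finset.card_range, nsmul_eq_mul, mul_one]
  field_simp

end PartialSums

theorem harmonic_over_sum_wk_general {Ω : Type*} [MeasurableSpace Ω] (P : Measure Ω)
    [IsProbabilityMeasure P] (E : ℕ → Ω → ℝ)
    (hdist : ∀ i, P.map (E i) = expMeasure 1) :
    ∀ N : ℕ, 1 ≤ N →
      ∫ ω, (∑ k ∈ Finset.Icc 1 N, (k : ℝ)⁻¹) /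
        (∑ k ∈ Finset.Icc 1 N, (∑ i ∈ Finset.range k, E i ω)⁻¹) ∂P ≤ 1 := by
  intro N hN
  have hexp : expMeasure 1 ≠ 0 :=
    have := isProbabilityMeasure_expMeasure one_pos
    IsProbabilityMeasure.ne_zero _
  have hlaw (i : ℕ) : HasLaw (E i) (expMeasure 1) P :=
    ⟨.of_map_ne_zero (hdist i ▸ hexp), hdist i⟩
  have hint (i : ℕ) : Integrable (E i) P := (hlaw i).integrable (integrable_id_expMeasure one_pos)
  have hmean (i : ℕ) : ∫ ω, E i ω ∂P = 1 := by
    simpa using (hlaw i).integral_eq.trans (integral_id_expMeasure one_pos)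
  have hpos : ∀ᵐ ω ∂P, ∀ i, 0 < E i ω :=
    ae_all_iff.2 fun i => ae_of_ae_map (hlaw i).aemeasurable (hdist i ▸ ae_pos_expMeasure 1)
  have hH : 0 < ∑ k ∈ Finset.Icc 1 N, (k : ℝ)⁻¹ :=
    Finset.sum_pos (fun k hk => by simp; grind) ⟨1, Finset.mem_Icc.2 ⟨le_rfl, hN⟩⟩
  calc _ ≤ ∫ ω, (∑ k ∈ Finset.Icc 1 N, (k : ℝ)⁻¹ ^ 2 * ∑ i ∈ Finset.range k, E i ω) /
          ∑ k ∈ Finset.Icc 1 N, (k : ℝ)⁻¹ ∂P := by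
        refine integral_mono_of_nonneg ?_
          ((integrable_sum_Icc_inv_sq_mul_sum_range hint N).div_const _) ?_
        · filter_upwards [hpos] with ω hω
          exact div_nonneg hH.le <| Finset.sum_nonneg fun k _ =>
            inv_nonneg.2 <| Finset.sum_nonneg fun i _ => (hω i).le
        · filter_upwards [hpos] with ω hω
          exact Finset.sum_div_sum_inv_le _ (fun k _ => by positivity) fun k hk =>
            Finset.sum_pos (fun i _ => hω i) (Finset.nonempty_range_iff.2 (by grind))
    _ = 1 := by
        rw [integral_div, integral_sum_Icc_inv_sq_mul_sum_range hint hmean, div_self hH.ne']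

/-- E[ (Σ_{k=1}^N 1/k) / (Σ_{k=1}^N w_k) ] ≤ 1 for every N ≥ 1,
    where w_k = 1/(E_1+⋯+E_k) with (E_i) i.i.d. standard exponentials. -/
theorem harmonic_over_sum_wk {Ω : Type*} [MeasurableSpace Ω] (P : Measure Ω)
    [IsProbabilityMeasure P] (E : ℕ → Ω → ℝ) (hmeas : ∀ i, Measurable (E i))
    (hindep : iIndepFun E P)
    (hdist : ∀ i, P.map (E i) = expMeasure 1) :
    ∀ N : ℕ, 1 ≤ N →
      ∫ ω, (∑ k ∈ Finset.Icc 1 N, (k : ℝ)⁻¹) /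
        (∑ k ∈ Finset.Icc 1 N, (∑ i ∈ Finset.range k, E i ω)⁻¹) ∂P ≤ 1 :=
  harmonic_over_sum_wk_general P E hdist
end
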